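/- Let (x^m) be a sequence in l(r,s,t,p;Δ) with 1 < p_n ≤ M, equipped with the Luxemburg norm. Then: (i) ‖x^m‖ → 1 implies σ_p(x^m) → 1; (ii) ‖x^m‖ → 0 if and only if σ_p(x^m) → 0. -/

import Mathlib

open Finset Filter Topology ENNReal

/-- The difference operator `Δ` with the convention `x₋₁ = 0`. -/
def del (x : ℕ → ℝ) (k : ℕ) : ℝ :=
  x k - if k = 0 then 0 else x (k - 1)

/-- The generalized-means-of-differences transform `(A(r,s,t)·Δ)x`. -/
noncomputable def Amap (r s t : ℕ → ℝ) (x : ℕ → ℝ) (n : ℕ) : ℝ :=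
  (1 / r n) * ∑ k ∈ Finset.range (n + 1), s (n - k) * t k * del x k

/-- The modular `σ_p` on `l(r,s,t,p;Δ)`, with values in `[0,∞]`. -/
noncomputable def sigmaP (r s t p : ℕ → ℝ) (x : ℕ → ℝ) : ℝ≥0∞ :=
  ∑' n, ENNReal.ofReal (|Amap r s t x n| ^ p n)

/-- The space `l(r,s,t,p;Δ)`. -/
def lrstp (r s t p : ℕ → ℝ) : Set (ℕ → ℝ) :=
  {x | sigmaP r s t p x < ⊤}

/-- The paranorm `h̃` on `l(r,s,t,p;Δ)`. -/
noncomputable def htilde (r s t p : ℕ → ℝ) (M : ℝ) (x : ℕ → ℝ) : ℝ :=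
  ((sigmaP r s t p x).toReal) ^ (1 / M)

/-- The Luxemburg norm on `l(r,s,t,p;Δ)`. -/
noncomputable def lux (r s t p : ℕ → ℝ) (x : ℕ → ℝ) : ℝ :=
  sInf {c : ℝ | 0 < c ∧ sigmaP r s t p (c⁻¹ • x) ≤ 1}

/-!
Since `1 ≤ pₙ ≤ M`, scaling by `a ≥ 0` multiplies every term of `σ_p` by `a ^ pₙ`, a number
between `a` and `a ^ M`; hence `min a (a ^ M) σ_p(x) ≤ σ_p(a x) ≤ max a (a ^ M) σ_p(x)`.
Comparing `σ_p(x / c)` with `1` for `c` on either side of `‖x‖` sandwiches the modular between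
two continuous functions of the norm, `min ‖x‖ ‖x‖^M ≤ σ_p(x) ≤ max ‖x‖ ‖x‖^M`, both equal to `0`
at `0` and to `1` at `1`.
-/

lemma Real.rpow_mem_Icc_min_max {a p M : ℝ} (ha : 0 ≤ a) (hp : 1 ≤ p) (hpM : p ≤ M) :
    a ^ p ∈ Set.Icc (min a (a ^ M)) (max a (a ^ M)) := by
  rcases le_total a 1 with ha1 | ha1
  · have hM : a ^ M ≤ a ^ p := Real.rpow_le_rpow_of_exponent_ge' ha ha1 (zero_le_one.trans hp) hpM
    have h1 : a ^ p ≤ a := by simpa using Real.rpow_le_rpow_of_exponent_ge' ha ha1 zero_le_one hp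
    exact ⟨min_le_of_right_le hM, le_max_of_le_left h1⟩
  · have hM : a ^ p ≤ a ^ M := Real.rpow_le_rpow_of_exponent_le ha1 hpM
    have h1 : a ≤ a ^ p := by simpa using Real.rpow_le_rpow_of_exponent_le ha1 hp
    exact ⟨min_le_of_left_le h1, le_max_of_le_right hM⟩

lemma Real.continuous_max_self_rpow_const {M : ℝ} (hM : 0 ≤ M) :
    Continuous fun c : ℝ => max c (c ^ M) :=
  continuous_id.max (Real.continuous_rpow_const hM)

lemma Real.continuous_min_self_rpow_const {M : ℝ} (hM : 0 ≤ M) :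
    Continuous fun c : ℝ => min c (c ^ M) :=
  continuous_id.min (Real.continuous_rpow_const hM)

section Modular

variable {r s t p : ℕ → ℝ} {x : ℕ → ℝ}

lemma del_smul (a : ℝ) (x : ℕ → ℝ) (k : ℕ) : del (a • x) k = a * del x k := by
  simp only [del, Pi.smul_apply, smul_eq_mul]
  split_ifs <;> ring

lemma Amap_smul (a : ℝ) (x : ℕ → ℝ) (n : ℕ) : Amap r s t (a • x) n = a * Amap r s t x n := by
  simp only [Amap, del_smul, Finset.mul_sum]
  exact Finset.sum_congr rfl fun k _ => by ring

lemma sigmaP_smul {a : ℝ} (ha : 0 ≤ a) (x : ℕ → ℝ) :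
    sigmaP r s t p (a • x) = ∑' n, ENNReal.ofReal (a ^ p n * |Amap r s t x n| ^ p n) := by
  simp only [sigmaP, Amap_smul, abs_mul, abs_of_nonneg ha,
    Real.mul_rpow ha (abs_nonneg _)]

lemma sigmaP_smul_mono (hp : ∀ n, 0 ≤ p n) (x : ℕ → ℝ) :
    MonotoneOn (fun a : ℝ => sigmaP r s t p (a • x)) (Set.Ici 0) := by
  intro a ha b hb hab
  simp only [sigmaP_smul ha, sigmaP_smul hb]
  gcongr with n
  exact hp n

variable {M : ℝ}

lemma ofReal_min_mul_sigmaP_le {a : ℝ} (ha : 0 ≤ a) (hp : ∀ n, 1 ≤ p n) (hpM : ∀ n, p n ≤ M)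
    (x : ℕ → ℝ) :
    ENNReal.ofReal (min a (a ^ M)) * sigmaP r s t p x ≤ sigmaP r s t p (a • x) := by
  rw [sigmaP_smul ha, sigmaP, ← ENNReal.tsum_mul_left]
  refine ENNReal.tsum_le_tsum fun n => ?_
  rw [← ENNReal.ofReal_mul (le_min ha (by positivity))]
  gcongr
  exact (Real.rpow_mem_Icc_min_max ha (hp n) (hpM n)).1

lemma sigmaP_smul_le_ofReal_max_mul {a : ℝ} (ha : 0 ≤ a) (hp : ∀ n, 1 ≤ p n)
    (hpM : ∀ n, p n ≤ M) (x : ℕ → ℝ) :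
    sigmaP r s t p (a • x) ≤ ENNReal.ofReal (max a (a ^ M)) * sigmaP r s t p x := by
  rw [sigmaP_smul ha, sigmaP, ← ENNReal.tsum_mul_left]
  refine ENNReal.tsum_le_tsum fun n => ?_
  rw [← ENNReal.ofReal_mul (le_max_of_le_left ha)]
  gcongr
  exact (Real.rpow_mem_Icc_min_max ha (hp n) (hpM n)).2

lemma lux_nonneg (x : ℕ → ℝ) : 0 ≤ lux r s t p x :=
  Real.sInf_nonneg fun _ hc => hc.1.le

lemma lux_le_of_sigmaP_inv_smul_le_one {c : ℝ} (hc : 0 < c)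
    (h : sigmaP r s t p (c⁻¹ • x) ≤ 1) : lux r s t p x ≤ c :=
  csInf_le ⟨0, fun _ hc => hc.1.le⟩ ⟨hc, h⟩

lemma one_lt_sigmaP_inv_smul_of_lt_lux {c : ℝ} (hc : 0 < c) (hcx : c < lux r s t p x) :
    1 < sigmaP r s t p (c⁻¹ • x) :=
  lt_of_not_ge fun h => hcx.not_ge (lux_le_of_sigmaP_inv_smul_le_one hc h)

lemma exists_sigmaP_inv_smul_le_one (hp : ∀ n, 1 ≤ p n) (hpM : ∀ n, p n ≤ M)
    (hx : x ∈ lrstp r s t p) : ∃ c : ℝ, 0 < c ∧ sigmaP r s t p (c⁻¹ • x) ≤ 1 := by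
  set S := (sigmaP r s t p x).toReal
  set c := max 1 S
  have hc : 1 ≤ c := le_max_left 1 S
  have hc0 : 0 < c := zero_lt_one.trans_le hc
  refine ⟨c, hc0, ?_⟩
  have hmax : max c⁻¹ (c⁻¹ ^ M) = c⁻¹ := max_eq_left (by
    simpa using Real.rpow_le_rpow_of_exponent_ge' (inv_nonneg.2 hc0.le) (inv_le_one_of_one_le₀ hc)
      zero_le_one ((hp 0).trans (hpM 0)))
  calc sigmaP r s t p (c⁻¹ • x) ≤ ENNReal.ofReal c⁻¹ * sigmaP r s t p x := by
        simpa [hmax] using sigmaP_smul_le_ofReal_max_mul (inv_nonneg.2 hc0.le) hp hpM x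
    _ = ENNReal.ofReal (c⁻¹ * S) := by
        rw [ENNReal.ofReal_mul (inv_nonneg.2 hc0.le), ENNReal.ofReal_toReal hx.ne]
    _ ≤ 1 := ENNReal.ofReal_le_one.2 (inv_mul_le_one_of_le₀ (le_max_right 1 S) hc0.le)

lemma sigmaP_inv_smul_le_one_of_lux_lt (hp : ∀ n, 1 ≤ p n) (hpM : ∀ n, p n ≤ M)
    (hx : x ∈ lrstp r s t p) {c : ℝ} (hcx : lux r s t p x < c) :
    sigmaP r s t p (c⁻¹ • x) ≤ 1 := by
  obtain ⟨c', ⟨hc'0, hc'⟩, hc'c⟩ :=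
    (csInf_lt_iff ⟨0, fun _ hc => hc.1.le⟩ (exists_sigmaP_inv_smul_le_one hp hpM hx)).1 hcx
  exact (sigmaP_smul_mono (fun n => zero_le_one.trans (hp n)) x
    (inv_nonneg.2 (hc'0.trans hc'c).le) (inv_nonneg.2 hc'0.le) (inv_anti₀ hc'0 hc'c.le)).trans hc'

lemma sigmaP_toReal_le_max_of_lux_lt (hp : ∀ n, 1 ≤ p n) (hpM : ∀ n, p n ≤ M)
    (hx : x ∈ lrstp r s t p) {c : ℝ} (hcx : lux r s t p x < c) :
    (sigmaP r s t p x).toReal ≤ max c (c ^ M) := by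
  have hc0 : 0 < c := (lux_nonneg x).trans_lt hcx
  have hscale :=
    sigmaP_smul_le_ofReal_max_mul (r := r) (s := s) (t := t) hc0.le hp hpM (c⁻¹ • x)
  rw [smul_inv_smul₀ hc0.ne'] at hscale
  refine ENNReal.toReal_le_of_le_ofReal (le_max_of_le_left hc0.le) ?_
  calc sigmaP r s t p x ≤ ENNReal.ofReal (max c (c ^ M)) * sigmaP r s t p (c⁻¹ • x) := hscale
    _ ≤ ENNReal.ofReal (max c (c ^ M)) :=
        mul_le_of_le_one_right' (sigmaP_inv_smul_le_one_of_lux_lt hp hpM hx hcx)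

lemma min_lt_sigmaP_toReal_of_lt_lux (hp : ∀ n, 1 ≤ p n) (hpM : ∀ n, p n ≤ M)
    (hx : x ∈ lrstp r s t p) {c : ℝ} (hc0 : 0 < c) (hcx : c < lux r s t p x) :
    min c (c ^ M) < (sigmaP r s t p x).toReal := by
  have hmin : 0 < min c (c ^ M) := lt_min hc0 (Real.rpow_pos_of_pos hc0 M)
  have hscale := ofReal_min_mul_sigmaP_le (r := r) (s := s) (t := t) hc0.le hp hpM (c⁻¹ • x)
  rw [smul_inv_smul₀ hc0.ne'] at hscale
  refine (ENNReal.ofReal_lt_iff_lt_toReal hmin.le hx.ne).1 (lt_of_lt_of_le ?_ hscale)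
  simpa using
    (ENNReal.mul_lt_mul_iff_right (ENNReal.ofReal_pos.2 hmin).ne' ENNReal.ofReal_ne_top).2
      (one_lt_sigmaP_inv_smul_of_lt_lux hc0 hcx)

lemma lux_le_of_sigmaP_toReal_le_min (hp : ∀ n, 1 ≤ p n) (hpM : ∀ n, p n ≤ M)
    (hx : x ∈ lrstp r s t p) {c : ℝ} (hc0 : 0 < c)
    (hxc : (sigmaP r s t p x).toReal ≤ min c (c ^ M)) : lux r s t p x ≤ c := by
  have hmin : 0 < min c (c ^ M) := lt_min hc0 (Real.rpow_pos_of_pos hc0 M)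
  have hscale := ofReal_min_mul_sigmaP_le (r := r) (s := s) (t := t) hc0.le hp hpM (c⁻¹ • x)
  rw [smul_inv_smul₀ hc0.ne'] at hscale
  refine lux_le_of_sigmaP_inv_smul_le_one hc0
    ((ENNReal.mul_le_mul_iff_right (ENNReal.ofReal_pos.2 hmin).ne' ENNReal.ofReal_ne_top).1 ?_)
  rw [mul_one]
  exact hscale.trans ((ENNReal.le_ofReal_iff_toReal_le hx.ne hmin.le).2 hxc)

lemma sigmaP_toReal_le_max_lux (hp : ∀ n, 1 ≤ p n) (hpM : ∀ n, p n ≤ M)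
    (hx : x ∈ lrstp r s t p) :
    (sigmaP r s t p x).toReal ≤ max (lux r s t p x) (lux r s t p x ^ M) := by
  have hcont := Real.continuous_max_self_rpow_const (zero_le_one.trans ((hp 0).trans (hpM 0)))
  exact ge_of_tendsto ((hcont.tendsto _).mono_left (nhdsWithin_le_nhds (s := Set.Ioi _)))
    (eventually_nhdsWithin_of_forall fun c hc => sigmaP_toReal_le_max_of_lux_lt hp hpM hx hc)

lemma min_lux_le_sigmaP_toReal (hp : ∀ n, 1 ≤ p n) (hpM : ∀ n, p n ≤ M)
    (hx : x ∈ lrstp r s t p) :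
    min (lux r s t p x) (lux r s t p x ^ M) ≤ (sigmaP r s t p x).toReal := by
  rcases (lux_nonneg x).eq_or_lt with hzero | hpos
  · rw [← hzero]
    exact min_le_of_left_le ENNReal.toReal_nonneg
  have hcont := Real.continuous_min_self_rpow_const (zero_le_one.trans ((hp 0).trans (hpM 0)))
  have hlim : Tendsto (fun c : ℝ => min c (c ^ M)) (𝓝[<] lux r s t p x)
      (𝓝 (min (lux r s t p x) (lux r s t p x ^ M))) :=
    (hcont.tendsto _).mono_left nhdsWithin_le_nhds
  refine le_of_tendsto hlim ?_
  filter_upwards [Ioo_mem_nhdsLT hpos] with c hc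
  exact (min_lt_sigmaP_toReal_of_lt_lux hp hpM hx hc.1 hc.2).le

end Modular

theorem lux_tendsto_iff_modular_general
    (r s t p : ℕ → ℝ)
    (M : ℝ) (hp : ∀ n, 1 < p n) (hpM : ∀ n, p n ≤ M)
    (xs : ℕ → ℕ → ℝ) (hxs : ∀ m, xs m ∈ lrstp r s t p) :
    (Tendsto (fun m => lux r s t p (xs m)) atTop (𝓝 1) →
      Tendsto (fun m => (sigmaP r s t p (xs m)).toReal) atTop (𝓝 1)) ∧
    (Tendsto (fun m => lux r s t p (xs m)) atTop (𝓝 0) ↔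
      Tendsto (fun m => (sigmaP r s t p (xs m)).toReal) atTop (𝓝 0)) := by
  have hp1 : ∀ n, 1 ≤ p n := fun n => (hp n).le
  have hM : 0 < M := one_pos.trans ((hp 0).trans_le (hpM 0))
  have hmax := Real.continuous_max_self_rpow_const hM.le
  have hmin := Real.continuous_min_self_rpow_const hM.le
  have upper m := sigmaP_toReal_le_max_lux hp1 hpM (hxs m)
  have lower m := min_lux_le_sigmaP_toReal hp1 hpM (hxs m)
  refine ⟨fun hlux => ?_, fun hlux => ?_, fun hσ => ?_⟩
  · exact tendsto_of_tendsto_of_tendsto_of_le_of_le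
      (by simpa [Function.comp_def] using (hmin.tendsto 1).comp hlux)
      (by simpa [Function.comp_def] using (hmax.tendsto 1).comp hlux) lower upper
  · exact tendsto_of_tendsto_of_tendsto_of_le_of_le tendsto_const_nhds
      (by simpa [Function.comp_def, Real.zero_rpow hM.ne'] using (hmax.tendsto 0).comp hlux)
      (fun m => ENNReal.toReal_nonneg) upper
  · refine tendsto_order.2 ⟨fun a ha => Eventually.of_forall fun m => ha.trans_le (lux_nonneg _),
      fun ε hε => ?_⟩
    have hmin_pos : 0 < min (ε / 2) ((ε / 2) ^ M) :=
      lt_min (half_pos hε) (Real.rpow_pos_of_pos (half_pos hε) M)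
    filter_upwards [(tendsto_order.1 hσ).2 _ hmin_pos] with m hm
    exact (lux_le_of_sigmaP_toReal_le_min hp1 hpM (hxs m) (half_pos hε) hm.le).trans_lt
      (half_lt_self hε)

theorem lux_tendsto_iff_modular
    (r s t p : ℕ → ℝ) (hr : ∀ n, r n ≠ 0) (ht : ∀ n, t n ≠ 0) (hs0 : s 0 ≠ 0)
    (M : ℝ) (hp : ∀ n, 1 < p n) (hpM : ∀ n, p n ≤ M)
    (xs : ℕ → ℕ → ℝ) (hxs : ∀ m, xs m ∈ lrstp r s t p) :
    (Tendsto (fun m => lux r s t p (xs m)) atTop (𝓝 1) →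
      Tendsto (fun m => (sigmaP r s t p (xs m)).toReal) atTop (𝓝 1)) ∧
    (Tendsto (fun m => lux r s t p (xs m)) atTop (𝓝 0) ↔
      Tendsto (fun m => (sigmaP r s t p (xs m)).toReal) atTop (𝓝 0)) :=
  lux_tendsto_iff_modular_general r s t p M hp hpM xs hxs
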